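/- arXiv:2605.07659 — 2 statements merged into one kernel-verified Lean document; each statement's English description precedes it below -/
import Mathlib

section
/- Let V₀ be an arbitrary smooth real-valued function on (0,∞) and d₉ a real constant. Let H be the Hamiltonian with potentials V₁ = 0, V₂(r) = d₉ − V₀(r), V₃ = 0, V₄ = 1/2, V₅ = 0, i.e. H = −(ħ²/2)Δ + V₀(r) + (d₉ − V₀(r))K + (1/2)(σ₁,p)(σ₂,p). Then the pseudo-scalar operator Y₃₀ = (1/2)(σ₁+σ₂, p) is an integral of motion: [H, Y₃₀] = 0. -/
noncomputable section

open scoped BigOperators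

/-- The spinor space `ℂ⁴ = ℂ² ⊗ ℂ²`, realized as functions on `Fin 2 × Fin 2`. -/
abbrev Spinor : Type := Fin 2 × Fin 2 → ℂ

/-- Wave functions on `ℝ³` (in the statements they are restricted to functions
that are smooth away from the origin). -/
abbrev WaveFn : Type := (Fin 3 → ℝ) → Spinor

/-- Operators: `ℂ`-linear combinations and compositions are formed pointwise. -/
abbrev Op : Type := WaveFn → WaveFn

/-- The commutator `[A,B] = AB − BA`. -/
def opComm (A B : Op) : Op := fun ψ => A (B ψ) - B (A ψ)

/-- The identity operator. -/
def idOp : Op := fun ψ => ψ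

/-- The Euclidean norm `r = |x|`. -/
def rfun (x : Fin 3 → ℝ) : ℝ := Real.sqrt (∑ k, x k ^ 2)

/-- Multiplication by a radial function `f(r)`. -/
def mulR (f : ℝ → ℝ) : Op := fun ψ x => (f (rfun x) : ℂ) • ψ x

/-- The position operator `x_k` (multiplication by the k-th coordinate). -/
def xOp (k : Fin 3) : Op := fun ψ x => (x k : ℂ) • ψ x

/-- The momentum operator `p_k = -ihbar ∂/∂x_k`. -/
def pOp (hbar : ℝ) (k : Fin 3) : Op :=
  fun ψ x => (-(Complex.I * (hbar : ℂ))) • fderiv ℝ ψ x (Pi.single k 1)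

/-- The Laplacian `Δ = Σ_k ∂²/∂x_k²`. -/
def lap : Op :=
  fun ψ x => ∑ k, fderiv ℝ (fun y => fderiv ℝ ψ y (Pi.single k 1)) x (Pi.single k 1)

/-- The totally antisymmetric Levi-Civita symbol `ε_{ijk}` on `Fin 3`. -/
def eps (i j k : Fin 3) : ℂ :=
  ((j.1 : ℂ) - (i.1 : ℂ)) * ((k.1 : ℂ) - (i.1 : ℂ)) * ((k.1 : ℂ) - (j.1 : ℂ)) / 2

/-- The standard Pauli matrices `σ¹, σ², σ³`. -/
def pauli : Fin 3 → Matrix (Fin 2) (Fin 2) ℂ :=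
  ![!![0, 1; 1, 0], !![0, -Complex.I; Complex.I, 0], !![1, 0; 0, -1]]

/-- `(σ₁)_k = σ^k ⊗ I₂`, acting on the first tensor factor. -/
def sigma1 (k : Fin 3) : Op := fun ψ x ab => ∑ j, pauli k ab.1 j * ψ x (j, ab.2)

/-- `(σ₂)_k = I₂ ⊗ σ^k`, acting on the second tensor factor. -/
def sigma2 (k : Fin 3) : Op := fun ψ x ab => ∑ j, pauli k ab.2 j * ψ x (ab.1, j)

/-- Dot product of triples of operators: `(A,B) = Σ_k A_k B_k`. -/
def dot (A B : Fin 3 → Op) : Op := ∑ k, A k ∘ B k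

/-- Cross product of triples of operators: `(A×B)_k = ε_{klm} A_l B_m`. -/
def cross (A B : Fin 3 → Op) (k : Fin 3) : Op := ∑ l, ∑ m, eps k l m • (A l ∘ B m)

/-- The angular momentum `L_k = ε_{klm} x_l p_m`. -/
def LOp (hbar : ℝ) (k : Fin 3) : Op := ∑ l, ∑ m, eps k l m • (xOp l ∘ pOp hbar m)

/-- The spin-exchange operator `K = (σ₁,σ₂)`. -/
def KOp : Op := dot sigma1 sigma2

/-- `σ₁ + σ₂` componentwise. -/
def sigmaSum (k : Fin 3) : Op := sigma1 k + sigma2 k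

/-- `σ₁ − σ₂` componentwise. -/
def sigmaDiff (k : Fin 3) : Op := sigma1 k - sigma2 k

/-- The general rotationally invariant two-spin Hamiltonian
`H = −(hbar²/2)Δ + V₀(r) + ½V₁(r)(σ₁+σ₂,L) + V₂(r)K + V₃(r)(x,σ₁)(x,σ₂)
    + V₄(r)(σ₁,p)(σ₂,p) + ½V₅(r)[(σ₁,L)(σ₂,L)+(σ₂,L)(σ₁,L)]`. -/
def Ham (hbar : ℝ) (V₀ V₁ V₂ V₃ V₄ V₅ : ℝ → ℝ) : Op :=
  (-(hbar ^ 2 / 2) : ℂ) • lap + mulR V₀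
    + ((1 : ℂ)/2) • (mulR V₁ ∘ dot sigmaSum (LOp hbar))
    + mulR V₂ ∘ KOp
    + mulR V₃ ∘ (dot xOp sigma1 ∘ dot xOp sigma2)
    + mulR V₄ ∘ (dot sigma1 (pOp hbar) ∘ dot sigma2 (pOp hbar))
    + ((1 : ℂ)/2) • (mulR V₅ ∘ (dot sigma1 (LOp hbar) ∘ dot sigma2 (LOp hbar)
        + dot sigma2 (LOp hbar) ∘ dot sigma1 (LOp hbar)))

/-!
The potential part of `H` is `d₉ K + V₀(r) (1 - K)`. Since `K = 2P - 1` with `P` the exchange of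
the two spin factors, `1 - K` is four times the projector onto the singlet, which the total spin
`σ₁ + σ₂` annihilates. So the commutator of `Y₃₀ = ½(σ₁ + σ₂, p)` with `V₀(r)`, a multiple of
`(∇V₀, σ₁ + σ₂)`, is killed by the factor `1 - K`, and `K` commutes with `σ₁ + σ₂` and with `p`.
The remaining terms commute with `Y₃₀` because partial derivatives commute with each other
(Schwarz) and with constant matrices, and `(σ₁, p)` commutes with `(σ₂, p)`.
-/

open Set
open scoped ContDiff

def onFirst (M : Matrix (Fin 2) (Fin 2) ℂ) : Spinor →L[ℂ] Spinor :=
  LinearMap.toContinuousLinearMap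
    { toFun := fun v ab => ∑ j, M ab.1 j * v (j, ab.2)
      map_add' := fun v w => by ext; simp [mul_add, Finset.sum_add_distrib]
      map_smul' := fun c v => by ext; simp [mul_add, mul_left_comm] }

def onSecond (M : Matrix (Fin 2) (Fin 2) ℂ) : Spinor →L[ℂ] Spinor :=
  LinearMap.toContinuousLinearMap
    { toFun := fun v ab => ∑ j, M ab.2 j * v (ab.1, j)
      map_add' := fun v w => by ext; simp [mul_add, Finset.sum_add_distrib]
      map_smul' := fun c v => by ext; simp [mul_add, mul_left_comm] }

lemma onFirst_apply (M : Matrix (Fin 2) (Fin 2) ℂ) (v : Spinor) (ab : Fin 2 × Fin 2) :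
    onFirst M v ab = ∑ j, M ab.1 j * v (j, ab.2) := rfl

lemma onSecond_apply (M : Matrix (Fin 2) (Fin 2) ℂ) (v : Spinor) (ab : Fin 2 × Fin 2) :
    onSecond M v ab = ∑ j, M ab.2 j * v (ab.1, j) := rfl

lemma commute_onFirst_onSecond (M N : Matrix (Fin 2) (Fin 2) ℂ) :
    Commute (onFirst M) (onSecond N) := by
  ext v ab
  simp only [mul_apply_eq_comp, onFirst_apply, onSecond_apply, Finset.mul_sum]
  exact Finset.sum_comm.trans (by simp only [mul_left_comm])

def totalSpin (a : Fin 3) : Spinor →L[ℂ] Spinor := onFirst (pauli a) + onSecond (pauli a)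

def spinExchange : Spinor →L[ℂ] Spinor := ∑ k, onFirst (pauli k) * onSecond (pauli k)

lemma spinExchange_apply (v : Spinor) (ab : Fin 2 × Fin 2) :
    spinExchange v ab = 2 * v ab.swap - v ab := by
  obtain ⟨i, j⟩ := ab
  fin_cases i <;> fin_cases j <;>
    simp [spinExchange, onFirst_apply, onSecond_apply, pauli, Fin.sum_univ_three] <;> ring_nf <;>
    simp only [Complex.I_sq] <;> ring

lemma commute_spinExchange_totalSpin (a : Fin 3) : Commute spinExchange (totalSpin a) := by
  ext v ⟨i, j⟩
  fin_cases a <;> fin_cases i <;> fin_cases j <;>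
    simp [totalSpin, spinExchange_apply, onFirst_apply, onSecond_apply, pauli] <;> ring

lemma totalSpin_mul_one_sub_spinExchange (a : Fin 3) : totalSpin a * (1 - spinExchange) = 0 := by
  ext v ⟨i, j⟩
  fin_cases a <;> fin_cases i <;> fin_cases j <;>
    simp [totalSpin, spinExchange_apply, onFirst_apply, onSecond_apply, pauli] <;> ring

def punctured : Set (Fin 3 → ℝ) := {x | x ≠ 0}

lemma isOpen_punctured : IsOpen punctured := isOpen_ne

section

variable {E F : Type*} [NormedAddCommGroup E] [NormedSpace ℝ E] [NormedAddCommGroup F]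
  [NormedSpace ℝ F]

lemma fderiv_fderiv_apply {f : E → F} {x : E} (hf : DifferentiableAt ℝ (fderiv ℝ f) x)
    (v w : E) : fderiv ℝ (fun y => fderiv ℝ f y w) x v = fderiv ℝ (fderiv ℝ f) x v w := by
  simp [fderiv_clm_apply hf (differentiableAt_const w)]

lemma ContDiffOn.differentiableAt_of_mem_punctured {φ : (Fin 3 → ℝ) → F}
    (hφ : ContDiffOn ℝ ∞ φ punctured) {x : Fin 3 → ℝ} (hx : x ∈ punctured) :
    DifferentiableAt ℝ φ x :=
  (hφ.contDiffAt (isOpen_punctured.mem_nhds hx)).differentiableAt (by simp)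

end

-- Operators are compared only on smooth functions and only on `ℝ³ ∖ {0}`, where the potentials
-- are smooth; locality (`congr`) lets such identities pass through derivatives.
structure IsDiffOp (A : Op) : Prop where
  contDiffOn : ∀ ⦃φ⦄, ContDiffOn ℝ ∞ φ punctured → ContDiffOn ℝ ∞ (A φ) punctured
  congr : ∀ ⦃φ χ⦄, EqOn φ χ punctured → EqOn (A φ) (A χ) punctured
  map_add : ∀ ⦃φ χ⦄, ContDiffOn ℝ ∞ φ punctured → ContDiffOn ℝ ∞ χ punctured →
    EqOn (A (φ + χ)) (A φ + A χ) punctured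
  map_smul : ∀ (c : ℂ) ⦃φ⦄, ContDiffOn ℝ ∞ φ punctured → EqOn (A (c • φ)) (c • A φ) punctured

def OpCommute (A B : Op) : Prop :=
  ∀ ⦃φ⦄, ContDiffOn ℝ ∞ φ punctured → EqOn (A (B φ)) (B (A φ)) punctured

namespace IsDiffOp

variable {A B : Op}

lemma map_zero (hA : IsDiffOp A) : EqOn (A 0) 0 punctured := by
  simpa using hA.map_smul 0 (φ := 0) contDiffOn_const

lemma comp (hA : IsDiffOp A) (hB : IsDiffOp B) : IsDiffOp (A ∘ B) where
  contDiffOn _ hφ := hA.contDiffOn (hB.contDiffOn hφ)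
  congr _ _ h := hA.congr (hB.congr h)
  map_add _ _ hφ hχ :=
    (hA.congr (hB.map_add hφ hχ)).trans (hA.map_add (hB.contDiffOn hφ) (hB.contDiffOn hχ))
  map_smul c _ hφ := (hA.congr (hB.map_smul c hφ)).trans (hA.map_smul c (hB.contDiffOn hφ))

lemma add (hA : IsDiffOp A) (hB : IsDiffOp B) : IsDiffOp (A + B) where
  contDiffOn _ hφ := (hA.contDiffOn hφ).add (hB.contDiffOn hφ)
  congr _ _ h x hx := congrArg₂ (· + ·) (hA.congr h hx) (hB.congr h hx)
  map_add _ _ hφ hχ x hx := by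
    simp only [Pi.add_apply, hA.map_add hφ hχ hx, hB.map_add hφ hχ hx]
    abel
  map_smul c _ hφ x hx := by
    simp only [Pi.add_apply, Pi.smul_apply, hA.map_smul c hφ hx, hB.map_smul c hφ hx, smul_add]

lemma smul (hA : IsDiffOp A) (c : ℂ) : IsDiffOp (c • A) where
  contDiffOn _ hφ := (hA.contDiffOn hφ).const_smul c
  congr _ _ h x hx := congrArg (c • ·) (hA.congr h hx)
  map_add _ _ hφ hχ x hx := by
    simp only [Pi.add_apply, Pi.smul_apply, hA.map_add hφ hχ hx, smul_add]
  map_smul d _ hφ x hx := by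
    simp only [Pi.smul_apply, hA.map_smul d hφ hx, smul_comm c d]

lemma zero : IsDiffOp 0 where
  contDiffOn _ _ := contDiffOn_const
  congr _ _ _ := eqOn_refl _ _
  map_add _ _ _ _ _ _ := by simp
  map_smul _ _ _ _ _ := by simp

lemma sum {ι : Type*} (s : Finset ι) {A : ι → Op} (hA : ∀ i ∈ s, IsDiffOp (A i)) :
    IsDiffOp (∑ i ∈ s, A i) := by
  classical
  induction s using Finset.induction_on with
  | empty => simpa using zero
  | insert i s hi ih =>
    rw [Finset.sum_insert hi]
    exact (hA i (Finset.mem_insert_self i s)).add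
      (ih fun j hj => hA j (Finset.mem_insert_of_mem hj))

lemma dot {A B : Fin 3 → Op} (hA : ∀ k, IsDiffOp (A k)) (hB : ∀ k, IsDiffOp (B k)) :
    IsDiffOp (dot A B) :=
  sum _ fun k _ => (hA k).comp (hB k)

end IsDiffOp

namespace OpCommute

variable {A A' B B' C : Op}

lemma symm (h : OpCommute A B) : OpCommute B A := fun _ hφ => (h hφ).symm

lemma refl (A : Op) : OpCommute A A := fun _ _ => eqOn_refl _ _

lemma comp_left (hA : IsDiffOp A) (hA' : IsDiffOp A') (h : OpCommute A B)
    (h' : OpCommute A' B) : OpCommute (A ∘ A') B := fun _ hφ =>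
  (hA.congr (h' hφ)).trans (h (hA'.contDiffOn hφ))

lemma add_left (hA : IsDiffOp A) (hA' : IsDiffOp A') (hB : IsDiffOp B) (h : OpCommute A B)
    (h' : OpCommute A' B) : OpCommute (A + A') B := fun _ hφ x hx => by
  simp only [Pi.add_apply, h hφ hx, h' hφ hx, hB.map_add (hA.contDiffOn hφ) (hA'.contDiffOn hφ) hx]

lemma smul_left (hA : IsDiffOp A) (hB : IsDiffOp B) (c : ℂ) (h : OpCommute A B) :
    OpCommute (c • A) B := fun _ hφ x hx => by
  simp only [Pi.smul_apply, h hφ hx, hB.map_smul c (hA.contDiffOn hφ) hx]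

lemma sum_left {ι : Type*} (s : Finset ι) {A : ι → Op} (hA : ∀ i ∈ s, IsDiffOp (A i))
    (hB : IsDiffOp B) (h : ∀ i ∈ s, OpCommute (A i) B) : OpCommute (∑ i ∈ s, A i) B := by
  classical
  induction s using Finset.induction_on with
  | empty =>
    rw [Finset.sum_empty]
    exact fun _ _ x hx => (hB.map_zero hx).symm
  | insert i s hi ih =>
    rw [Finset.sum_insert hi]
    have hs := fun j hj => hA j (Finset.mem_insert_of_mem hj)
    exact add_left (hA i (Finset.mem_insert_self i s)) (IsDiffOp.sum s hs) hB
      (h i (Finset.mem_insert_self i s)) (ih hs fun j hj => h j (Finset.mem_insert_of_mem hj))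

lemma dot_left {A B : Fin 3 → Op} (hA : ∀ k, IsDiffOp (A k)) (hB : ∀ k, IsDiffOp (B k))
    (hC : IsDiffOp C) (h : ∀ k, OpCommute (A k) C) (h' : ∀ k, OpCommute (B k) C) :
    OpCommute (dot A B) C :=
  sum_left _ (fun k _ => (hA k).comp (hB k)) hC fun k _ => comp_left (hA k) (hB k) (h k) (h' k)

lemma smul_right (hA : IsDiffOp A) (hB : IsDiffOp B) (c : ℂ) (h : OpCommute A B) :
    OpCommute A (c • B) :=
  (smul_left hB hA c h.symm).symm

lemma add_right (hA : IsDiffOp A) (hB : IsDiffOp B) (hB' : IsDiffOp B') (h : OpCommute A B)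
    (h' : OpCommute A B') : OpCommute A (B + B') :=
  (add_left hB hB' hA h.symm h'.symm).symm

lemma dot_right {B C : Fin 3 → Op} (hA : IsDiffOp A) (hB : ∀ k, IsDiffOp (B k))
    (hC : ∀ k, IsDiffOp (C k)) (h : ∀ k, OpCommute A (B k)) (h' : ∀ k, OpCommute A (C k)) :
    OpCommute A (dot B C) :=
  (dot_left hB hC hA (fun k => (h k).symm) fun k => (h' k).symm).symm

end OpCommute

def pointwise (M : Spinor →L[ℂ] Spinor) : Op := fun φ x => M (φ x)

def dirDeriv (v : Fin 3 → ℝ) : Op := fun φ x => fderiv ℝ φ x v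

lemma isDiffOp_pointwise (M : Spinor →L[ℂ] Spinor) : IsDiffOp (pointwise M) where
  contDiffOn _ hφ := (M.restrictScalars ℝ).contDiff.comp_contDiffOn hφ
  congr _ _ h _ hx := congrArg M (h hx)
  map_add _ _ _ _ _ _ := M.map_add _ _
  map_smul c _ _ _ _ := M.map_smul c _

lemma isDiffOp_dirDeriv (v : Fin 3 → ℝ) : IsDiffOp (dirDeriv v) where
  contDiffOn _ hφ :=
    (hφ.fderiv_of_isOpen isOpen_punctured (m := ∞) (by simp)).clm_apply contDiffOn_const
  congr _ _ h x hx := by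
    simp only [dirDeriv, (h.eventuallyEq_of_mem (isOpen_punctured.mem_nhds hx)).fderiv_eq]
  map_add _ _ hφ hχ x hx := by
    simp [dirDeriv, fderiv_add (hφ.differentiableAt_of_mem_punctured hx)
      (hχ.differentiableAt_of_mem_punctured hx)]
  map_smul c _ hφ x hx := by
    simp [dirDeriv, fderiv_const_smul (hφ.differentiableAt_of_mem_punctured hx)]

lemma opCommute_pointwise {M N : Spinor →L[ℂ] Spinor} (h : Commute M N) :
    OpCommute (pointwise M) (pointwise N) := fun φ _ x _ =>
  congrArg (· (φ x)) h.eq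

lemma opCommute_dirDeriv_pointwise (v : Fin 3 → ℝ) (M : Spinor →L[ℂ] Spinor) :
    OpCommute (dirDeriv v) (pointwise M) := fun _ hφ x hx =>
  congrArg (· v) ((M.restrictScalars ℝ).hasFDerivAt.comp x
    (hφ.differentiableAt_of_mem_punctured hx).hasFDerivAt).fderiv

lemma opCommute_dirDeriv (v w : Fin 3 → ℝ) : OpCommute (dirDeriv v) (dirDeriv w) := by
  intro φ hφ x hx
  have hφx := hφ.contDiffAt (isOpen_punctured.mem_nhds hx)
  have hd : DifferentiableAt ℝ (fderiv ℝ φ) x :=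
    (hφx.fderiv_right (m := ∞) (by simp)).differentiableAt (by simp)
  show fderiv ℝ (fun y => fderiv ℝ φ y w) x v = fderiv ℝ (fun y => fderiv ℝ φ y v) x w
  rw [fderiv_fderiv_apply hd, fderiv_fderiv_apply hd]
  refine hφx.isSymmSndFDerivAt ?_ v w
  rw [minSmoothness_of_isRCLikeNormedField]
  exact ENat.LEInfty.out

lemma dot_apply (A B : Fin 3 → Op) (φ : WaveFn) (x : Fin 3 → ℝ) :
    dot A B φ x = ∑ k, A k (B k φ) x := by
  simp [dot, Finset.sum_apply]

lemma pOp_eq (hbar : ℝ) (a : Fin 3) :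
    pOp hbar a = (-(Complex.I * hbar)) • dirDeriv (Pi.single a 1) := rfl

lemma lap_eq : lap = ∑ k, dirDeriv (Pi.single k 1) ∘ dirDeriv (Pi.single k 1) := by
  ext φ x
  simp only [lap, Finset.sum_apply, Function.comp_apply]
  rfl

lemma sigmaSum_eq (a : Fin 3) : sigmaSum a = pointwise (totalSpin a) := rfl

lemma KOp_eq : KOp = pointwise spinExchange := by
  ext φ x
  simp [KOp, dot, pointwise, spinExchange, sigma1, sigma2, onFirst_apply, onSecond_apply,
    Finset.sum_apply]

lemma isDiffOp_pOp (hbar : ℝ) (a : Fin 3) : IsDiffOp (pOp hbar a) :=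
  (isDiffOp_dirDeriv _).smul _

lemma isDiffOp_lap : IsDiffOp lap := by
  rw [lap_eq]
  exact IsDiffOp.sum _ fun k _ => (isDiffOp_dirDeriv _).comp (isDiffOp_dirDeriv _)

lemma opCommute_pOp_pointwise (hbar : ℝ) (a : Fin 3) (M : Spinor →L[ℂ] Spinor) :
    OpCommute (pOp hbar a) (pointwise M) :=
  (opCommute_dirDeriv_pointwise _ M).smul_left (isDiffOp_dirDeriv _) (isDiffOp_pointwise M) _

lemma opCommute_pOp (hbar : ℝ) (a b : Fin 3) : OpCommute (pOp hbar a) (pOp hbar b) :=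
  ((opCommute_dirDeriv _ _).smul_left (isDiffOp_dirDeriv _) (isDiffOp_dirDeriv _) _).smul_right
    (isDiffOp_pOp hbar a) (isDiffOp_dirDeriv _) _

lemma opCommute_lap_of_dirDeriv {B : Op} (hB : IsDiffOp B)
    (h : ∀ v, OpCommute (dirDeriv v) B) : OpCommute lap B := by
  rw [lap_eq]
  exact OpCommute.sum_left _ (fun k _ => (isDiffOp_dirDeriv _).comp (isDiffOp_dirDeriv _)) hB
    fun k _ => OpCommute.comp_left (isDiffOp_dirDeriv _) (isDiffOp_dirDeriv _) (h _) (h _)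

lemma opCommute_lap_pOp (hbar : ℝ) (a : Fin 3) : OpCommute lap (pOp hbar a) :=
  opCommute_lap_of_dirDeriv (isDiffOp_pOp hbar a) fun v =>
    (opCommute_dirDeriv v _).smul_right (isDiffOp_dirDeriv v) (isDiffOp_dirDeriv _) _

lemma opCommute_lap_pointwise (M : Spinor →L[ℂ] Spinor) : OpCommute lap (pointwise M) :=
  opCommute_lap_of_dirDeriv (isDiffOp_pointwise M) fun v => opCommute_dirDeriv_pointwise v M

lemma sum_sq_pos_of_mem_punctured {x : Fin 3 → ℝ} (hx : x ∈ punctured) : 0 < ∑ k, x k ^ 2 := by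
  obtain ⟨k, hk⟩ : ∃ k, x k ≠ 0 := Function.ne_iff.mp hx
  exact Finset.sum_pos' (fun i _ => sq_nonneg _) ⟨k, Finset.mem_univ _, by positivity⟩

lemma contDiffOn_rfun : ContDiffOn ℝ ∞ rfun punctured := fun _ hx =>
  ((ContDiff.sum fun k _ => (contDiff_apply ℝ ℝ k).pow 2).contDiffAt.sqrt
    (sum_sq_pos_of_mem_punctured hx).ne').contDiffWithinAt

lemma contDiffOn_radial {g : ℝ → ℝ} (hg : ContDiffOn ℝ ∞ g (Ioi 0)) :
    ContDiffOn ℝ ∞ (fun y => (g (rfun y) : ℂ)) punctured :=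
  Complex.ofRealCLM.contDiff.comp_contDiffOn
    (hg.comp contDiffOn_rfun fun _ hx => Real.sqrt_pos.mpr (sum_sq_pos_of_mem_punctured hx))

lemma isDiffOp_mulR {g : ℝ → ℝ} (hg : ContDiffOn ℝ ∞ g (Ioi 0)) : IsDiffOp (mulR g) where
  contDiffOn _ hφ := (contDiffOn_radial hg).smul hφ
  congr _ _ h _ hx := congrArg (_ • ·) (h hx)
  map_add _ _ _ _ _ _ := smul_add _ _ _
  map_smul c _ _ _ _ := smul_comm _ c _

lemma dirDeriv_mulR {g : ℝ → ℝ} (hg : ContDiffOn ℝ ∞ g (Ioi 0)) {φ : WaveFn}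
    (hφ : ContDiffOn ℝ ∞ φ punctured) {x : Fin 3 → ℝ} (hx : x ∈ punctured) (v : Fin 3 → ℝ) :
    dirDeriv v (mulR g φ) x
      = (g (rfun x) : ℂ) • dirDeriv v φ x + fderiv ℝ (fun y => (g (rfun y) : ℂ)) x v • φ x := by
  show fderiv ℝ (fun y => (g (rfun y) : ℂ) • φ y) x v = _
  rw [fderiv_fun_smul ((contDiffOn_radial hg).differentiableAt_of_mem_punctured hx)
    (hφ.differentiableAt_of_mem_punctured hx)]
  rfl

lemma dot_sigmaSum_pOp_mulR {hbar : ℝ} {g : ℝ → ℝ} (hg : ContDiffOn ℝ ∞ g (Ioi 0)) {ψ : WaveFn}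
    (hψ : ContDiffOn ℝ ∞ ψ punctured) (hψ₀ : ∀ a y, totalSpin a (ψ y) = 0) :
    EqOn (dot sigmaSum (pOp hbar) (mulR g ψ)) (mulR g (dot sigmaSum (pOp hbar) ψ)) punctured := by
  intro x hx
  simp only [mulR, dot_apply, sigmaSum_eq, pointwise, pOp_eq, Pi.smul_apply,
    dirDeriv_mulR hg hψ hx, Finset.smul_sum]
  refine Finset.sum_congr rfl fun a _ => ?_
  simp only [map_smul, map_add, hψ₀, smul_zero, add_zero]
  exact smul_comm _ _ _

lemma isDiffOp_dot_pointwise_pOp (hbar : ℝ) (M : Fin 3 → Spinor →L[ℂ] Spinor) :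
    IsDiffOp (dot (fun a => pointwise (M a)) (pOp hbar)) :=
  IsDiffOp.dot (fun _ => isDiffOp_pointwise _) (isDiffOp_pOp hbar)

lemma opCommute_lap_dot_sigmaSum_pOp (hbar : ℝ) : OpCommute lap (dot sigmaSum (pOp hbar)) :=
  OpCommute.dot_right isDiffOp_lap (fun a => isDiffOp_pointwise (totalSpin a)) (isDiffOp_pOp hbar)
    (fun a => opCommute_lap_pointwise (totalSpin a)) (opCommute_lap_pOp hbar)

lemma opCommute_pointwise_dot_sigmaSum_pOp (hbar : ℝ) {M : Spinor →L[ℂ] Spinor}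
    (hM : ∀ a, Commute M (totalSpin a)) : OpCommute (pointwise M) (dot sigmaSum (pOp hbar)) :=
  OpCommute.dot_right (isDiffOp_pointwise M) (fun a => isDiffOp_pointwise (totalSpin a))
    (isDiffOp_pOp hbar)
    (fun a => opCommute_pointwise (hM a)) fun a => (opCommute_pOp_pointwise hbar a M).symm

lemma opCommute_mulR_comp_pointwise_dot_sigmaSum_pOp (hbar : ℝ) {g : ℝ → ℝ}
    (hg : ContDiffOn ℝ ∞ g (Ioi 0)) {P : Spinor →L[ℂ] Spinor} (hP : ∀ a, totalSpin a * P = 0)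
    (hPc : ∀ a, Commute P (totalSpin a)) :
    OpCommute (mulR g ∘ pointwise P) (dot sigmaSum (pOp hbar)) := fun φ hφ x hx =>
  calc mulR g (pointwise P (dot sigmaSum (pOp hbar) φ)) x
      = mulR g (dot sigmaSum (pOp hbar) (pointwise P φ)) x :=
        (isDiffOp_mulR hg).congr (opCommute_pointwise_dot_sigmaSum_pOp hbar hPc hφ) hx
    _ = dot sigmaSum (pOp hbar) (mulR g (pointwise P φ)) x :=
        (dot_sigmaSum_pOp_mulR hg ((isDiffOp_pointwise P).contDiffOn hφ)
          (fun a y => DFunLike.congr_fun (hP a) (φ y)) hx).symm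

lemma dot_sigmaSum_pOp (hbar : ℝ) :
    dot sigmaSum (pOp hbar) = dot sigma1 (pOp hbar) + dot sigma2 (pOp hbar) := by
  ext φ x
  simp [dot_apply, sigmaSum, Finset.sum_add_distrib]

lemma opCommute_dot_sigma1_pOp_dot_sigma2_pOp (hbar : ℝ) :
    OpCommute (dot sigma1 (pOp hbar)) (dot sigma2 (pOp hbar)) :=
  OpCommute.dot_left (fun a => isDiffOp_pointwise (onFirst (pauli a))) (isDiffOp_pOp hbar)
    (isDiffOp_dot_pointwise_pOp hbar fun b => onSecond (pauli b))
    (fun a => OpCommute.dot_right (isDiffOp_pointwise (onFirst (pauli a)))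
      (fun b => isDiffOp_pointwise (onSecond (pauli b))) (isDiffOp_pOp hbar)
      (fun _ => opCommute_pointwise (commute_onFirst_onSecond _ _))
      fun b => (opCommute_pOp_pointwise hbar b (onFirst (pauli a))).symm)
    (fun a => OpCommute.dot_right (isDiffOp_pOp hbar a)
      (fun b => isDiffOp_pointwise (onSecond (pauli b))) (isDiffOp_pOp hbar)
      (fun b => opCommute_pOp_pointwise hbar a (onSecond (pauli b))) (opCommute_pOp hbar a))

lemma opCommute_comp_dot_sigmaSum_pOp (hbar : ℝ) :
    OpCommute (dot sigma1 (pOp hbar) ∘ dot sigma2 (pOp hbar)) (dot sigmaSum (pOp hbar)) := by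
  have h₁ := isDiffOp_dot_pointwise_pOp hbar (fun a => onFirst (pauli a))
  have h₂ := isDiffOp_dot_pointwise_pOp hbar (fun a => onSecond (pauli a))
  have h₁₂ := opCommute_dot_sigma1_pOp_dot_sigma2_pOp hbar
  rw [dot_sigmaSum_pOp]
  exact OpCommute.add_right (h₁.comp h₂) h₁ h₂ (.comp_left h₁ h₂ (.refl _) h₁₂.symm)
    (.comp_left h₁ h₂ h₁₂ (.refl _))

lemma Ham_eq (hbar : ℝ) (V₀ : ℝ → ℝ) (d₉ : ℝ) :
    Ham hbar V₀ (fun _ => 0) (fun r => d₉ - V₀ r) (fun _ => 0) (fun _ => 1 / 2) (fun _ => 0)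
      = (-(hbar ^ 2 / 2) : ℂ) • lap + (d₉ : ℂ) • pointwise spinExchange
        + mulR V₀ ∘ pointwise (1 - spinExchange)
        + ((1 : ℂ) / 2) • (dot sigma1 (pOp hbar) ∘ dot sigma2 (pOp hbar)) := by
  ext φ x
  simp only [Ham, neg_smul, one_div, KOp_eq, Pi.add_apply, Pi.neg_apply, Pi.smul_apply,
    Function.comp_apply, mulR, Complex.coe_smul, Complex.ofReal_zero, zero_smul, smul_zero,
    add_zero, Complex.ofReal_sub, pointwise, Complex.ofReal_inv, Complex.ofReal_ofNat, smul_add,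
    smul_eq_mul, Complex.real_smul, Pi.zero_apply, sub_apply, one_apply_eq_self, Pi.sub_apply,
    add_left_inj]
  ring

lemma OpCommute.opComm_eq_zero {A B : Op} (h : OpCommute A B) {φ : WaveFn}
    (hφ : ContDiffOn ℝ ∞ φ punctured) {x : Fin 3 → ℝ} (hx : x ∈ punctured) :
    opComm A B φ x = 0 :=
  sub_eq_zero.mpr (h hφ hx)

theorem statement7_general (hbar : ℝ) (V₀ : ℝ → ℝ) (d₉ : ℝ)
    (hV₀ : ContDiffOn ℝ (⊤ : ℕ∞) V₀ (Set.Ioi (0 : ℝ)))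
    (ψ : WaveFn) (hψ : ContDiffOn ℝ (⊤ : ℕ∞) ψ {x : Fin 3 → ℝ | x ≠ 0})
    (x : Fin 3 → ℝ) (hx : x ≠ 0) :
    opComm
      (Ham hbar V₀ (fun _ => 0) (fun r => d₉ - V₀ r) (fun _ => 0)
        (fun _ => 1 / 2) (fun _ => 0))
      (((1 : ℂ)/2) • dot sigmaSum (pOp hbar)) ψ x = 0 := by
  refine OpCommute.opComm_eq_zero ?_ hψ hx
  have hT := isDiffOp_dot_pointwise_pOp hbar totalSpin
  have hQ := (isDiffOp_dot_pointwise_pOp hbar fun a => onFirst (pauli a)).comp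
    (isDiffOp_dot_pointwise_pOp hbar fun a => onSecond (pauli a))
  have hL := isDiffOp_lap.smul (-(hbar ^ 2 / 2) : ℂ)
  have hK := (isDiffOp_pointwise spinExchange).smul (d₉ : ℂ)
  have hV := (isDiffOp_mulR hV₀).comp (isDiffOp_pointwise (1 - spinExchange))
  rw [Ham_eq]
  refine .smul_right (((hL.add hK).add hV).add (hQ.smul _)) hT _ <|
    .add_left ((hL.add hK).add hV) (hQ.smul _) hT
      (.add_left (hL.add hK) hV hT (.add_left hL hK hT ?kinetic ?exchange) ?potential) ?spinMomentum
  case kinetic => exact (opCommute_lap_dot_sigmaSum_pOp hbar).smul_left isDiffOp_lap hT _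
  case exchange =>
    exact (opCommute_pointwise_dot_sigmaSum_pOp hbar commute_spinExchange_totalSpin).smul_left
      (isDiffOp_pointwise _) hT _
  case potential =>
    exact opCommute_mulR_comp_pointwise_dot_sigmaSum_pOp hbar hV₀
      totalSpin_mul_one_sub_spinExchange
      fun a => (Commute.one_left _).sub_left (commute_spinExchange_totalSpin a)
  case spinMomentum => exact (opCommute_comp_dot_sigmaSum_pOp hbar).smul_left hQ hT _

/-- for `V₁ = 0`, `V₂ = d₉ − V₀`, `V₃ = 0`, `V₄ = 1/2`, `V₅ = 0` and arbitrary
smooth `V₀`, the operator `Y₃₀ = ½(σ₁+σ₂,p)` is an integral of motion. -/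
theorem statement7 (hbar : ℝ) (hhbar : hbar ≠ 0) (V₀ : ℝ → ℝ) (d₉ : ℝ)
    (hV₀ : ContDiffOn ℝ (⊤ : ℕ∞) V₀ (Set.Ioi (0 : ℝ)))
    (ψ : WaveFn) (hψ : ContDiffOn ℝ (⊤ : ℕ∞) ψ {x : Fin 3 → ℝ | x ≠ 0})
    (x : Fin 3 → ℝ) (hx : x ≠ 0) :
    opComm
      (Ham hbar V₀ (fun _ => 0) (fun r => d₉ - V₀ r) (fun _ => 0)
        (fun _ => 1 / 2) (fun _ => 0))
      (((1 : ℂ)/2) • dot sigmaSum (pOp hbar)) ψ x = 0 :=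
  statement7_general hbar V₀ d₉ hV₀ ψ hψ x hx
end
end

section
/- Let X = (σ₂,L), Y = (σ₁,L), Z = (σ₁×σ₂,L), and L² = Σ_k L_k². Then the following operator identities hold: [K, Y] = 2iZ, [K, X] = −2iZ, [K, Z] = 4i(X − Y), [Y, X] = iħ Z, [Y, Z] = 2iK L² − i(YX + XY) − 2iħ X, and [X, Z] = −2iK L² + i(YX + XY) + 2iħ Y. -/
noncomputable section

open scoped BigOperators

/-- `X = (σ₂,L)`. -/
def XOpL (hbar : ℝ) : Op := dot sigma2 (LOp hbar)

/-- `Y = (σ₁,L)`. -/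
def YOpL (hbar : ℝ) : Op := dot sigma1 (LOp hbar)

/-- `Z = (σ₁×σ₂,L)`. -/
def ZOpL (hbar : ℝ) : Op := dot (cross sigma1 sigma2) (LOp hbar)

/-- `L² = Σ_k L_k²`. -/
def L2Op (hbar : ℝ) : Op := ∑ k, LOp hbar k ∘ LOp hbar k

namespace S17

abbrev V : Type := Fin 3 → ℝ

@[simp] theorem eps000 : eps 0 0 0 = 0 := by norm_num [eps]
@[simp] theorem eps001 : eps 0 0 1 = 0 := by norm_num [eps]
@[simp] theorem eps002 : eps 0 0 2 = 0 := by norm_num [eps]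
@[simp] theorem eps010 : eps 0 1 0 = 0 := by norm_num [eps]
@[simp] theorem eps011 : eps 0 1 1 = 0 := by norm_num [eps]
@[simp] theorem eps012 : eps 0 1 2 = 1 := by norm_num [eps]
@[simp] theorem eps020 : eps 0 2 0 = 0 := by norm_num [eps]
@[simp] theorem eps021 : eps 0 2 1 = (-1) := by norm_num [eps]
@[simp] theorem eps022 : eps 0 2 2 = 0 := by norm_num [eps]
@[simp] theorem eps100 : eps 1 0 0 = 0 := by norm_num [eps]
@[simp] theorem eps101 : eps 1 0 1 = 0 := by norm_num [eps]
@[simp] theorem eps102 : eps 1 0 2 = (-1) := by norm_num [eps]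
@[simp] theorem eps110 : eps 1 1 0 = 0 := by norm_num [eps]
@[simp] theorem eps111 : eps 1 1 1 = 0 := by norm_num [eps]
@[simp] theorem eps112 : eps 1 1 2 = 0 := by norm_num [eps]
@[simp] theorem eps120 : eps 1 2 0 = 1 := by norm_num [eps]
@[simp] theorem eps121 : eps 1 2 1 = 0 := by norm_num [eps]
@[simp] theorem eps122 : eps 1 2 2 = 0 := by norm_num [eps]
@[simp] theorem eps200 : eps 2 0 0 = 0 := by norm_num [eps]
@[simp] theorem eps201 : eps 2 0 1 = 1 := by norm_num [eps]
@[simp] theorem eps202 : eps 2 0 2 = 0 := by norm_num [eps]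
@[simp] theorem eps210 : eps 2 1 0 = (-1) := by norm_num [eps]
@[simp] theorem eps211 : eps 2 1 1 = 0 := by norm_num [eps]
@[simp] theorem eps212 : eps 2 1 2 = 0 := by norm_num [eps]
@[simp] theorem eps220 : eps 2 2 0 = 0 := by norm_num [eps]
@[simp] theorem eps221 : eps 2 2 1 = 0 := by norm_num [eps]
@[simp] theorem eps222 : eps 2 2 2 = 0 := by norm_num [eps]

def e (m : Fin 3) : V := Pi.single m 1

def Sm (f : V → ℂ) : Prop := ∀ x : V, x ≠ 0 → ContDiffAt ℝ (⊤ : ℕ∞) f x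

def D (m : Fin 3) (f : V → ℂ) : V → ℂ := fun x => fderiv ℝ f x (e m)

def coordC (l : Fin 3) : V →L[ℝ] ℂ :=
  Complex.ofRealCLM.comp (ContinuousLinearMap.proj l)

theorem coordC_apply (l : Fin 3) (v : V) : coordC l v = (v l : ℂ) := rfl

theorem Sm_diffAt {f : V → ℂ} (hf : Sm f) {x : V} (hx : x ≠ 0) :
    DifferentiableAt ℝ f x := (hf x hx).differentiableAt (by simp)

theorem Sm_D {f : V → ℂ} (hf : Sm f) (m : Fin 3) : Sm (D m f) := by
  intro x hx
  have h1 : ContDiffAt ℝ (⊤ : ℕ∞) (fderiv ℝ f) x :=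
    (hf x hx).fderiv_right (m := (⊤:ℕ∞)) (by exact_mod_cast le_top)
  exact h1.clm_apply contDiffAt_const

theorem Sm_add {f g : V → ℂ} (hf : Sm f) (hg : Sm g) : Sm (fun y => f y + g y) :=
  fun x hx => (hf x hx).add (hg x hx)

theorem Sm_const_mul {f : V → ℂ} (hf : Sm f) (c : ℂ) : Sm (fun y => c * f y) :=
  fun x hx => contDiffAt_const.mul (hf x hx)

theorem Sm_coord_mul {f : V → ℂ} (hf : Sm f) (l : Fin 3) : Sm (fun y => (y l : ℂ) * f y) :=
  fun x hx => ((coordC l).contDiff.contDiffAt).mul (hf x hx)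

theorem Sm_sum {ι : Type*} (s : Finset ι) (f : ι → V → ℂ) (hf : ∀ i ∈ s, Sm (f i)) :
    Sm (fun y => ∑ i ∈ s, f i y) :=
  fun x hx => ContDiffAt.sum (fun i hi => hf i hi x hx)

theorem Sm_congr {f g : V → ℂ} (hf : Sm f) (h : ∀ y : V, y ≠ 0 → g y = f y) : Sm g := by
  intro x hx
  refine (hf x hx).congr_of_eventuallyEq ?_
  have hU : {y : V | y ≠ 0} ∈ nhds x := by
    refine IsOpen.mem_nhds ?_ hx
    exact isOpen_compl_singleton
  exact Filter.eventuallyEq_of_mem hU h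

theorem eventuallyEq_of_ne {f g : V → ℂ} {x : V} (hx : x ≠ 0)
    (h : ∀ y : V, y ≠ 0 → f y = g y) : f =ᶠ[nhds x] g := by
  have hU : {y : V | y ≠ 0} ∈ nhds x := IsOpen.mem_nhds isOpen_compl_singleton hx
  exact Filter.eventuallyEq_of_mem hU h

theorem D_congr {f g : V → ℂ} {x : V} (h : f =ᶠ[nhds x] g) (m : Fin 3) :
    D m f x = D m g x := by
  unfold D; rw [h.fderiv_eq]

theorem D_add {f g : V → ℂ} (hf : Sm f) (hg : Sm g) (m : Fin 3) {x : V} (hx : x ≠ 0) :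
    D m (fun y => f y + g y) x = D m f x + D m g x := by
  unfold D
  rw [fderiv_fun_add (Sm_diffAt hf hx) (Sm_diffAt hg hx)]; rfl

theorem D_const_mul {f : V → ℂ} (hf : Sm f) (c : ℂ) (m : Fin 3) {x : V} (hx : x ≠ 0) :
    D m (fun y => c * f y) x = c * D m f x := by
  unfold D
  rw [fderiv_const_mul (Sm_diffAt hf hx)]; rfl

theorem D_sum {ι : Type*} (s : Finset ι) (f : ι → V → ℂ) (hf : ∀ i ∈ s, Sm (f i))
    (m : Fin 3) {x : V} (hx : x ≠ 0) :
    D m (fun y => ∑ i ∈ s, f i y) x = ∑ i ∈ s, D m (f i) x := by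
  unfold D
  rw [fderiv_fun_sum (fun i hi => Sm_diffAt (hf i hi) hx)]
  simp

theorem D_coord_mul {f : V → ℂ} (hf : Sm f) (l m : Fin 3) {x : V} (hx : x ≠ 0) :
    D m (fun y => (y l : ℂ) * f y) x
      = (if l = m then 1 else 0) * f x + (x l : ℂ) * D m f x := by
  unfold D
  rw [show (fun y : V => (y l : ℂ) * f y) = fun y => (coordC l y) * f y from rfl]
  rw [fderiv_fun_mul ((coordC l).differentiableAt) (Sm_diffAt hf hx)]
  have h2 : fderiv ℝ (fun y => coordC l y) x = coordC l := (coordC l).fderiv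
  simp only [ContinuousLinearMap.add_apply, ContinuousLinearMap.smul_apply,
    ContinuousLinearMap.coe_smul', Pi.smul_apply, h2]
  rw [coordC_apply]
  have h3 : coordC l (e m) = if l = m then 1 else 0 := by
    rw [coordC_apply]
    simp [e, Pi.single_apply, eq_comm]
    split_ifs <;> norm_num
  rw [h3]
  by_cases h : l = m <;> simp [h, smul_eq_mul] <;> ring

theorem D_symm {f : V → ℂ} (hf : Sm f) (m m' : Fin 3) {x : V} (hx : x ≠ 0) :
    D m (D m' f) x = D m' (D m f) x := by
  have hsymm : IsSymmSndFDerivAt ℝ f x := by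
    exact (hf x hx).isSymmSndFDerivAt (n := ((⊤ : ℕ∞) : WithTop ℕ∞)) (by
      have h22 : ((2:ℕ∞) : WithTop ℕ∞) = (2 : WithTop ℕ∞) := rfl
      rw [← h22, minSmoothness_of_isRCLikeNormedField]; exact WithTop.coe_le_coe.mpr le_top)
  have key : ∀ a b : Fin 3, D a (D b f) x = fderiv ℝ (fderiv ℝ f) x (e a) (e b) := by
    intro a b
    unfold D
    have hdf : DifferentiableAt ℝ (fderiv ℝ f) x :=
      ((hf x hx).fderiv_right (m := (⊤:ℕ∞)) (by exact_mod_cast le_top)).differentiableAt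
        (by simp)
    have : (fun y => fderiv ℝ f y (e b))
        = fun y => (ContinuousLinearMap.apply ℝ ℂ (e b)) (fderiv ℝ f y) := rfl
    rw [this, fderiv_comp' x (ContinuousLinearMap.apply ℝ ℂ (e b)).differentiableAt hdf,
      ContinuousLinearMap.fderiv]
    rfl
  rw [key, key, hsymm (e m) (e m')]

def Lc (h : ℝ) (k : Fin 3) (f : V → ℂ) : V → ℂ :=
  fun x => ∑ l, ∑ m, eps k l m * ((x l : ℂ) * (-(Complex.I * h) * D m f x))

theorem Sm_Lc {f : V → ℂ} (hf : Sm f) (h : ℝ) (k : Fin 3) : Sm (Lc h k f) := by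
  have he : Lc h k f = fun y => ∑ l, ∑ m,
      eps k l m * ((y l : ℂ) * (-(Complex.I * h) * D m f y)) := rfl
  rw [he]
  apply Sm_sum; intro l _
  apply Sm_sum; intro m _
  exact Sm_const_mul (Sm_coord_mul (Sm_const_mul (Sm_D hf m) _) l) _

theorem Lc_congr {f g : V → ℂ} {x : V} (h : f =ᶠ[nhds x] g) (hb : ℝ) (k : Fin 3) :
    Lc hb k f x = Lc hb k g x := by
  unfold Lc
  refine Finset.sum_congr rfl fun l _ => Finset.sum_congr rfl fun m _ => ?_
  rw [D_congr h]

theorem Lc_add {f g : V → ℂ} (hf : Sm f) (hg : Sm g) (h : ℝ) (k : Fin 3) {x : V} (hx : x ≠ 0) :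
    Lc h k (fun y => f y + g y) x = Lc h k f x + Lc h k g x := by
  unfold Lc
  rw [← Finset.sum_add_distrib]
  refine Finset.sum_congr rfl fun l _ => ?_
  rw [← Finset.sum_add_distrib]
  refine Finset.sum_congr rfl fun m _ => ?_
  rw [D_add hf hg m hx]; ring

theorem Lc_const_mul {f : V → ℂ} (hf : Sm f) (c : ℂ) (h : ℝ) (k : Fin 3) {x : V} (hx : x ≠ 0) :
    Lc h k (fun y => c * f y) x = c * Lc h k f x := by
  unfold Lc
  rw [Finset.mul_sum]
  refine Finset.sum_congr rfl fun l _ => ?_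
  rw [Finset.mul_sum]
  refine Finset.sum_congr rfl fun m _ => ?_
  rw [D_const_mul hf c m hx]; ring

theorem Lc_sum {ι : Type*} (s : Finset ι) (f : ι → V → ℂ) (hf : ∀ i ∈ s, Sm (f i))
    (h : ℝ) (k : Fin 3) {x : V} (hx : x ≠ 0) :
    Lc h k (fun y => ∑ i ∈ s, f i y) x = ∑ i ∈ s, Lc h k (f i) x := by
  unfold Lc
  have hD : ∀ m, D m (fun y => ∑ i ∈ s, f i y) x = ∑ i ∈ s, D m (f i) x :=
    fun m => D_sum s f hf m hx
  simp only [hD, Finset.mul_sum]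
  conv_rhs => rw [Finset.sum_comm]
  refine Finset.sum_congr rfl fun l _ => ?_
  exact Finset.sum_comm


theorem D_Lc {f : V → ℂ} (hf : Sm f) (h : ℝ) (l m' : Fin 3) {x : V} (hx : x ≠ 0) :
    D m' (Lc h l f) x = ∑ a, ∑ b, eps l a b *
      ((if a = m' then 1 else 0) * (-(Complex.I * h) * D b f x)
        + (x a : ℂ) * (-(Complex.I * h) * D m' (D b f) x)) := by
  have hLc : Lc h l f = fun y => ∑ a, ∑ b,
      eps l a b * ((y a : ℂ) * (-(Complex.I * h) * D b f y)) := rfl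
  rw [hLc]
  rw [D_sum _ _ (fun a _ => Sm_sum _ _ fun b _ =>
      Sm_const_mul (Sm_coord_mul (Sm_const_mul (Sm_D hf b) _) a) _) m' hx]
  refine Finset.sum_congr rfl fun a _ => ?_
  rw [D_sum _ _ (fun b _ => Sm_const_mul (Sm_coord_mul (Sm_const_mul (Sm_D hf b) _) a) _) m' hx]
  refine Finset.sum_congr rfl fun b _ => ?_
  rw [D_const_mul (Sm_coord_mul (Sm_const_mul (Sm_D hf b) _) a) _ m' hx,
      D_coord_mul (Sm_const_mul (Sm_D hf b) _) a m' hx,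
      D_const_mul (Sm_D hf b) _ m' hx]

set_option maxHeartbeats 1000000 in
theorem LcComm01 {f : V → ℂ} (hf : Sm f) (h : ℝ) {x : V} (hx : x ≠ 0) :
    Lc h 0 (Lc h 1 f) x - Lc h 1 (Lc h 0 f) x
      = Complex.I * h * ∑ n, eps 0 1 n * Lc h n f x := by
  have expand : ∀ k l : Fin 3, Lc h k (Lc h l f) x = ∑ a, ∑ b, eps k a b *
      ((x a : ℂ) * (-(Complex.I * h) * D b (Lc h l f) x)) := fun _ _ => rfl
  rw [expand, expand]
  have hDL : ∀ l m', D m' (Lc h l f) x = ∑ a, ∑ b, eps l a b *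
      ((if a = m' then 1 else 0) * (-(Complex.I * h) * D b f x)
        + (x a : ℂ) * (-(Complex.I * h) * D m' (D b f) x)) := fun l m' => D_Lc hf h l m' hx
  have hLc : ∀ n, Lc h n f x = ∑ a, ∑ b, eps n a b *
      ((x a : ℂ) * (-(Complex.I * h) * D b f x)) := fun _ => rfl
  have hs : ∀ a b : Fin 3, D a (D b f) x = D b (D a f) x := fun a b => D_symm hf a b hx
  simp only [hDL, hLc, Fin.sum_univ_three]
  simp only [Fin.isValue, eps000, eps001, eps002, eps010, eps011, eps012, eps020, eps021,
      eps022, eps100, eps101, eps102, eps110, eps111, eps112, eps120, eps121, eps122,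
      eps200, eps201, eps202, eps210, eps211, eps212, eps220, eps221, eps222,
      Fin.reduceEq, reduceIte, zero_mul, mul_zero, one_mul, mul_one, neg_mul, mul_neg, neg_neg,
      zero_add, add_zero, neg_zero, if_true, if_false]
  simp only [hs 1 0, hs 2 0, hs 2 1]
  ring

set_option maxHeartbeats 1000000 in
theorem LcComm10 {f : V → ℂ} (hf : Sm f) (h : ℝ) {x : V} (hx : x ≠ 0) :
    Lc h 1 (Lc h 0 f) x - Lc h 0 (Lc h 1 f) x
      = Complex.I * h * ∑ n, eps 1 0 n * Lc h n f x := by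
  have expand : ∀ k l : Fin 3, Lc h k (Lc h l f) x = ∑ a, ∑ b, eps k a b *
      ((x a : ℂ) * (-(Complex.I * h) * D b (Lc h l f) x)) := fun _ _ => rfl
  rw [expand, expand]
  have hDL : ∀ l m', D m' (Lc h l f) x = ∑ a, ∑ b, eps l a b *
      ((if a = m' then 1 else 0) * (-(Complex.I * h) * D b f x)
        + (x a : ℂ) * (-(Complex.I * h) * D m' (D b f) x)) := fun l m' => D_Lc hf h l m' hx
  have hLc : ∀ n, Lc h n f x = ∑ a, ∑ b, eps n a b *
      ((x a : ℂ) * (-(Complex.I * h) * D b f x)) := fun _ => rfl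
  have hs : ∀ a b : Fin 3, D a (D b f) x = D b (D a f) x := fun a b => D_symm hf a b hx
  simp only [hDL, hLc, Fin.sum_univ_three]
  simp only [Fin.isValue, eps000, eps001, eps002, eps010, eps011, eps012, eps020, eps021,
      eps022, eps100, eps101, eps102, eps110, eps111, eps112, eps120, eps121, eps122,
      eps200, eps201, eps202, eps210, eps211, eps212, eps220, eps221, eps222,
      Fin.reduceEq, reduceIte, zero_mul, mul_zero, one_mul, mul_one, neg_mul, mul_neg, neg_neg,
      zero_add, add_zero, neg_zero, if_true, if_false]
  simp only [hs 1 0, hs 2 0, hs 2 1]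
  ring

set_option maxHeartbeats 1000000 in
theorem LcComm02 {f : V → ℂ} (hf : Sm f) (h : ℝ) {x : V} (hx : x ≠ 0) :
    Lc h 0 (Lc h 2 f) x - Lc h 2 (Lc h 0 f) x
      = Complex.I * h * ∑ n, eps 0 2 n * Lc h n f x := by
  have expand : ∀ k l : Fin 3, Lc h k (Lc h l f) x = ∑ a, ∑ b, eps k a b *
      ((x a : ℂ) * (-(Complex.I * h) * D b (Lc h l f) x)) := fun _ _ => rfl
  rw [expand, expand]
  have hDL : ∀ l m', D m' (Lc h l f) x = ∑ a, ∑ b, eps l a b *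
      ((if a = m' then 1 else 0) * (-(Complex.I * h) * D b f x)
        + (x a : ℂ) * (-(Complex.I * h) * D m' (D b f) x)) := fun l m' => D_Lc hf h l m' hx
  have hLc : ∀ n, Lc h n f x = ∑ a, ∑ b, eps n a b *
      ((x a : ℂ) * (-(Complex.I * h) * D b f x)) := fun _ => rfl
  have hs : ∀ a b : Fin 3, D a (D b f) x = D b (D a f) x := fun a b => D_symm hf a b hx
  simp only [hDL, hLc, Fin.sum_univ_three]
  simp only [Fin.isValue, eps000, eps001, eps002, eps010, eps011, eps012, eps020, eps021,
      eps022, eps100, eps101, eps102, eps110, eps111, eps112, eps120, eps121, eps122,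
      eps200, eps201, eps202, eps210, eps211, eps212, eps220, eps221, eps222,
      Fin.reduceEq, reduceIte, zero_mul, mul_zero, one_mul, mul_one, neg_mul, mul_neg, neg_neg,
      zero_add, add_zero, neg_zero, if_true, if_false]
  simp only [hs 1 0, hs 2 0, hs 2 1]
  ring

set_option maxHeartbeats 1000000 in
theorem LcComm20 {f : V → ℂ} (hf : Sm f) (h : ℝ) {x : V} (hx : x ≠ 0) :
    Lc h 2 (Lc h 0 f) x - Lc h 0 (Lc h 2 f) x
      = Complex.I * h * ∑ n, eps 2 0 n * Lc h n f x := by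
  have expand : ∀ k l : Fin 3, Lc h k (Lc h l f) x = ∑ a, ∑ b, eps k a b *
      ((x a : ℂ) * (-(Complex.I * h) * D b (Lc h l f) x)) := fun _ _ => rfl
  rw [expand, expand]
  have hDL : ∀ l m', D m' (Lc h l f) x = ∑ a, ∑ b, eps l a b *
      ((if a = m' then 1 else 0) * (-(Complex.I * h) * D b f x)
        + (x a : ℂ) * (-(Complex.I * h) * D m' (D b f) x)) := fun l m' => D_Lc hf h l m' hx
  have hLc : ∀ n, Lc h n f x = ∑ a, ∑ b, eps n a b *
      ((x a : ℂ) * (-(Complex.I * h) * D b f x)) := fun _ => rfl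
  have hs : ∀ a b : Fin 3, D a (D b f) x = D b (D a f) x := fun a b => D_symm hf a b hx
  simp only [hDL, hLc, Fin.sum_univ_three]
  simp only [Fin.isValue, eps000, eps001, eps002, eps010, eps011, eps012, eps020, eps021,
      eps022, eps100, eps101, eps102, eps110, eps111, eps112, eps120, eps121, eps122,
      eps200, eps201, eps202, eps210, eps211, eps212, eps220, eps221, eps222,
      Fin.reduceEq, reduceIte, zero_mul, mul_zero, one_mul, mul_one, neg_mul, mul_neg, neg_neg,
      zero_add, add_zero, neg_zero, if_true, if_false]
  simp only [hs 1 0, hs 2 0, hs 2 1]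
  ring

set_option maxHeartbeats 1000000 in
theorem LcComm12 {f : V → ℂ} (hf : Sm f) (h : ℝ) {x : V} (hx : x ≠ 0) :
    Lc h 1 (Lc h 2 f) x - Lc h 2 (Lc h 1 f) x
      = Complex.I * h * ∑ n, eps 1 2 n * Lc h n f x := by
  have expand : ∀ k l : Fin 3, Lc h k (Lc h l f) x = ∑ a, ∑ b, eps k a b *
      ((x a : ℂ) * (-(Complex.I * h) * D b (Lc h l f) x)) := fun _ _ => rfl
  rw [expand, expand]
  have hDL : ∀ l m', D m' (Lc h l f) x = ∑ a, ∑ b, eps l a b *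
      ((if a = m' then 1 else 0) * (-(Complex.I * h) * D b f x)
        + (x a : ℂ) * (-(Complex.I * h) * D m' (D b f) x)) := fun l m' => D_Lc hf h l m' hx
  have hLc : ∀ n, Lc h n f x = ∑ a, ∑ b, eps n a b *
      ((x a : ℂ) * (-(Complex.I * h) * D b f x)) := fun _ => rfl
  have hs : ∀ a b : Fin 3, D a (D b f) x = D b (D a f) x := fun a b => D_symm hf a b hx
  simp only [hDL, hLc, Fin.sum_univ_three]
  simp only [Fin.isValue, eps000, eps001, eps002, eps010, eps011, eps012, eps020, eps021,
      eps022, eps100, eps101, eps102, eps110, eps111, eps112, eps120, eps121, eps122,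
      eps200, eps201, eps202, eps210, eps211, eps212, eps220, eps221, eps222,
      Fin.reduceEq, reduceIte, zero_mul, mul_zero, one_mul, mul_one, neg_mul, mul_neg, neg_neg,
      zero_add, add_zero, neg_zero, if_true, if_false]
  simp only [hs 1 0, hs 2 0, hs 2 1]
  ring

set_option maxHeartbeats 1000000 in
theorem LcComm21 {f : V → ℂ} (hf : Sm f) (h : ℝ) {x : V} (hx : x ≠ 0) :
    Lc h 2 (Lc h 1 f) x - Lc h 1 (Lc h 2 f) x
      = Complex.I * h * ∑ n, eps 2 1 n * Lc h n f x := by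
  have expand : ∀ k l : Fin 3, Lc h k (Lc h l f) x = ∑ a, ∑ b, eps k a b *
      ((x a : ℂ) * (-(Complex.I * h) * D b (Lc h l f) x)) := fun _ _ => rfl
  rw [expand, expand]
  have hDL : ∀ l m', D m' (Lc h l f) x = ∑ a, ∑ b, eps l a b *
      ((if a = m' then 1 else 0) * (-(Complex.I * h) * D b f x)
        + (x a : ℂ) * (-(Complex.I * h) * D m' (D b f) x)) := fun l m' => D_Lc hf h l m' hx
  have hLc : ∀ n, Lc h n f x = ∑ a, ∑ b, eps n a b *
      ((x a : ℂ) * (-(Complex.I * h) * D b f x)) := fun _ => rfl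
  have hs : ∀ a b : Fin 3, D a (D b f) x = D b (D a f) x := fun a b => D_symm hf a b hx
  simp only [hDL, hLc, Fin.sum_univ_three]
  simp only [Fin.isValue, eps000, eps001, eps002, eps010, eps011, eps012, eps020, eps021,
      eps022, eps100, eps101, eps102, eps110, eps111, eps112, eps120, eps121, eps122,
      eps200, eps201, eps202, eps210, eps211, eps212, eps220, eps221, eps222,
      Fin.reduceEq, reduceIte, zero_mul, mul_zero, one_mul, mul_one, neg_mul, mul_neg, neg_neg,
      zero_add, add_zero, neg_zero, if_true, if_false]
  simp only [hs 1 0, hs 2 0, hs 2 1]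
  ring

theorem eps_diag (k n : Fin 3) : eps k k n = 0 := by simp [eps]

theorem LcComm {f : V → ℂ} (hf : Sm f) (h : ℝ) (k l : Fin 3) {x : V} (hx : x ≠ 0) :
    Lc h k (Lc h l f) x - Lc h l (Lc h k f) x
      = Complex.I * h * ∑ n, eps k l n * Lc h n f x := by
  rcases eq_or_ne k l with rfl | hkl
  · simp [eps_diag]
  · fin_cases k <;> fin_cases l
    · exact absurd rfl hkl
    · exact LcComm01 hf h hx
    · exact LcComm02 hf h hx
    · exact LcComm10 hf h hx
    · exact absurd rfl hkl
    · exact LcComm12 hf h hx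
    · exact LcComm20 hf h hx
    · exact LcComm21 hf h hx
    · exact absurd rfl hkl

def cmp (ψ : WaveFn) (cd : Fin 2 × Fin 2) : V → ℂ := fun y => ψ y cd

def SmW (ψ : WaveFn) : Prop := ∀ cd, Sm (cmp ψ cd)

theorem smW_of_hyp {ψ : WaveFn} (hψ : ContDiffOn ℝ (⊤ : ℕ∞) ψ {x : Fin 3 → ℝ | x ≠ 0}) :
    SmW ψ := by
  intro cd x hx
  have hop : IsOpen {x : Fin 3 → ℝ | x ≠ 0} := isOpen_compl_singleton
  have h1 : ContDiffAt ℝ (⊤ : ℕ∞) ψ x := hψ.contDiffAt (hop.mem_nhds hx)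
  exact contDiffAt_pi.1 h1 cd

theorem SmW_diffAt {ψ : WaveFn} (hψ : SmW ψ) {x : V} (hx : x ≠ 0) :
    DifferentiableAt ℝ ψ x := by
  have h1 : ContDiffAt ℝ (⊤ : ℕ∞) ψ x := contDiffAt_pi.2 fun cd => hψ cd x hx
  exact h1.differentiableAt (by simp)

theorem fderiv_cmp {ψ : WaveFn} (hψ : SmW ψ) {x : V} (hx : x ≠ 0) (v : V)
    (cd : Fin 2 × Fin 2) : fderiv ℝ ψ x v cd = fderiv ℝ (cmp ψ cd) x v := by
  have h := fderiv_pi (𝕜 := ℝ) (φ := fun cd y => ψ y cd) (x := x)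
    (fun cd => Sm_diffAt (hψ cd) hx)
  rw [show fderiv ℝ ψ x = ContinuousLinearMap.pi (fun cd => fderiv ℝ (cmp ψ cd) x) from h]
  rfl

theorem LOp_cmp {ψ : WaveFn} (hψ : SmW ψ) (h : ℝ) (k : Fin 3) {y : V} (hy : y ≠ 0)
    (cd : Fin 2 × Fin 2) : LOp h k ψ y cd = Lc h k (cmp ψ cd) y := by
  unfold LOp Lc
  simp only [Finset.sum_apply, Pi.smul_apply, smul_eq_mul]
  refine Finset.sum_congr rfl fun l _ => Finset.sum_congr rfl fun m _ => ?_
  unfold xOp pOp Function.comp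
  simp only [Pi.smul_apply, smul_eq_mul]
  rw [fderiv_cmp hψ hy]
  rfl

theorem Sm_cmp_LOp {ψ : WaveFn} (hψ : SmW ψ) (h : ℝ) (k : Fin 3) :
    SmW (LOp h k ψ) := by
  intro cd
  exact Sm_congr (Sm_Lc (hψ cd) h k) (fun y hy => LOp_cmp hψ h k hy cd)

/-- generic: push `Lc` through a finite linear combination valid away from 0 -/
theorem Lc_comb {ι : Type*} [Fintype ι] (c : ι → ℂ) (f : ι → V → ℂ) (hf : ∀ i, Sm (f i))
    (h : ℝ) (k : Fin 3) {x : V} (hx : x ≠ 0) (g : V → ℂ)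
    (hg : ∀ y : V, y ≠ 0 → g y = ∑ i, c i * f i y) :
    Lc h k g x = ∑ i, c i * Lc h k (f i) x := by
  rw [Lc_congr (eventuallyEq_of_ne hx hg) h k]
  rw [Lc_sum Finset.univ (fun i => fun y => c i * f i y)
    (fun i _ => Sm_const_mul (hf i) (c i)) h k hx]
  exact Finset.sum_congr rfl fun i _ => Lc_const_mul (hf i) (c i) h k hx

theorem K_apply (ψ : WaveFn) (y : V) (cd : Fin 2 × Fin 2) :
    KOp ψ y cd = ∑ uv : Fin 2 × Fin 2, (∑ k, pauli k cd.1 uv.1 * pauli k cd.2 uv.2) * ψ y uv := by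
  unfold KOp dot sigma1 sigma2
  simp only [Finset.sum_apply, Function.comp, Fintype.sum_prod_type,
    Fin.sum_univ_three, Fin.sum_univ_two]
  ring

theorem Y_apply {ψ : WaveFn} (hψ : SmW ψ) (h : ℝ) {y : V} (hy : y ≠ 0) (cd : Fin 2 × Fin 2) :
    YOpL h ψ y cd = ∑ k, ∑ u, pauli k cd.1 u * Lc h k (cmp ψ (u, cd.2)) y := by
  unfold YOpL dot sigma1
  simp only [Finset.sum_apply, Function.comp]
  refine Finset.sum_congr rfl fun k _ => Finset.sum_congr rfl fun u _ => ?_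
  rw [LOp_cmp hψ h k hy]

theorem X_apply {ψ : WaveFn} (hψ : SmW ψ) (h : ℝ) {y : V} (hy : y ≠ 0) (cd : Fin 2 × Fin 2) :
    XOpL h ψ y cd = ∑ k, ∑ u, pauli k cd.2 u * Lc h k (cmp ψ (cd.1, u)) y := by
  unfold XOpL dot sigma2
  simp only [Finset.sum_apply, Function.comp]
  refine Finset.sum_congr rfl fun k _ => Finset.sum_congr rfl fun u _ => ?_
  rw [LOp_cmp hψ h k hy]

theorem Z_apply {ψ : WaveFn} (hψ : SmW ψ) (h : ℝ) {y : V} (hy : y ≠ 0) (cd : Fin 2 × Fin 2) :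
    ZOpL h ψ y cd = ∑ k, ∑ uv : Fin 2 × Fin 2,
      (∑ l, ∑ m, eps k l m * (pauli l cd.1 uv.1 * pauli m cd.2 uv.2))
        * Lc h k (cmp ψ uv) y := by
  unfold ZOpL dot cross sigma1 sigma2
  simp only [Finset.sum_apply, Pi.smul_apply, Function.comp, smul_eq_mul]
  refine Finset.sum_congr rfl fun k _ => ?_
  have hL : ∀ uv : Fin 2 × Fin 2, LOp h k ψ y uv = Lc h k (cmp ψ uv) y :=
    fun uv => LOp_cmp hψ h k hy uv
  simp only [hL, Fintype.sum_prod_type, Fin.sum_univ_three, Fin.sum_univ_two]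
  ring

theorem L2_apply {ψ : WaveFn} (hψ : SmW ψ) (h : ℝ) {y : V} (hy : y ≠ 0) (cd : Fin 2 × Fin 2) :
    L2Op h ψ y cd = ∑ k, Lc h k (Lc h k (cmp ψ cd)) y := by
  unfold L2Op
  simp only [Finset.sum_apply, Function.comp]
  refine Finset.sum_congr rfl fun k _ => ?_
  rw [LOp_cmp (Sm_cmp_LOp hψ h k) h k hy]
  exact Lc_congr (eventuallyEq_of_ne hy fun z hz => LOp_cmp hψ h k hz cd) h k

theorem SmW_K {ψ : WaveFn} (hψ : SmW ψ) : SmW (KOp ψ) := by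
  intro cd
  refine Sm_congr (f := fun y => ∑ uv : Fin 2 × Fin 2,
    (∑ k, pauli k cd.1 uv.1 * pauli k cd.2 uv.2) * cmp ψ uv y) ?_ ?_
  · exact Sm_sum _ _ fun uv _ => Sm_const_mul (hψ uv) _
  · exact fun y _ => K_apply ψ y cd

theorem SmW_Y {ψ : WaveFn} (hψ : SmW ψ) (h : ℝ) : SmW (YOpL h ψ) := by
  intro cd
  refine Sm_congr (f := fun y => ∑ k, ∑ u, pauli k cd.1 u * Lc h k (cmp ψ (u, cd.2)) y) ?_ ?_
  · exact Sm_sum _ _ fun k _ => Sm_sum _ _ fun u _ => Sm_const_mul (Sm_Lc (hψ _) h k) _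
  · exact fun y hy => Y_apply hψ h hy cd

theorem SmW_X {ψ : WaveFn} (hψ : SmW ψ) (h : ℝ) : SmW (XOpL h ψ) := by
  intro cd
  refine Sm_congr (f := fun y => ∑ k, ∑ u, pauli k cd.2 u * Lc h k (cmp ψ (cd.1, u)) y) ?_ ?_
  · exact Sm_sum _ _ fun k _ => Sm_sum _ _ fun u _ => Sm_const_mul (Sm_Lc (hψ _) h k) _
  · exact fun y hy => X_apply hψ h hy cd

theorem SmW_Z {ψ : WaveFn} (hψ : SmW ψ) (h : ℝ) : SmW (ZOpL h ψ) := by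
  intro cd
  refine Sm_congr (f := fun y => ∑ k, ∑ uv : Fin 2 × Fin 2,
    (∑ l, ∑ m, eps k l m * (pauli l cd.1 uv.1 * pauli m cd.2 uv.2)) * Lc h k (cmp ψ uv) y) ?_ ?_
  · exact Sm_sum _ _ fun k _ => Sm_sum _ _ fun uv _ => Sm_const_mul (Sm_Lc (hψ _) h k) _
  · exact fun y hy => Z_apply hψ h hy cd

@[simp] theorem pauli000 : pauli 0 0 0 = 0 := by norm_num [pauli]
@[simp] theorem pauli001 : pauli 0 0 1 = 1 := by norm_num [pauli]
@[simp] theorem pauli010 : pauli 0 1 0 = 1 := by norm_num [pauli]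
@[simp] theorem pauli011 : pauli 0 1 1 = 0 := by norm_num [pauli]
@[simp] theorem pauli100 : pauli 1 0 0 = 0 := by norm_num [pauli]
@[simp] theorem pauli101 : pauli 1 0 1 = (-Complex.I) := by norm_num [pauli]
@[simp] theorem pauli110 : pauli 1 1 0 = Complex.I := by norm_num [pauli]
@[simp] theorem pauli111 : pauli 1 1 1 = 0 := by norm_num [pauli]
@[simp] theorem pauli200 : pauli 2 0 0 = 1 := by norm_num [pauli, Matrix.cons_val_two]
@[simp] theorem pauli201 : pauli 2 0 1 = 0 := by norm_num [pauli, Matrix.cons_val_two]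
@[simp] theorem pauli210 : pauli 2 1 0 = 0 := by norm_num [pauli, Matrix.cons_val_two]
@[simp] theorem pauli211 : pauli 2 1 1 = (-1) := by norm_num [pauli, Matrix.cons_val_two]

theorem I_pow_three : Complex.I ^ 3 = -Complex.I := by
  rw [pow_succ, Complex.I_sq]; ring

theorem Lc_swap10 {f : V → ℂ} (hf : Sm f) (h : ℝ) {x : V} (hx : x ≠ 0) :
    Lc h 1 (Lc h 0 f) x = Lc h 0 (Lc h 1 f) x - Complex.I * h * Lc h 2 f x := by
  have hc := LcComm hf h 1 0 hx
  simp only [Fin.sum_univ_three, eps100, eps101, eps102] at hc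
  linear_combination hc

theorem Lc_swap20 {f : V → ℂ} (hf : Sm f) (h : ℝ) {x : V} (hx : x ≠ 0) :
    Lc h 2 (Lc h 0 f) x = Lc h 0 (Lc h 2 f) x + Complex.I * h * Lc h 1 f x := by
  have hc := LcComm hf h 2 0 hx
  simp only [Fin.sum_univ_three, eps200, eps201, eps202] at hc
  linear_combination hc

theorem Lc_swap21 {f : V → ℂ} (hf : Sm f) (h : ℝ) {x : V} (hx : x ≠ 0) :
    Lc h 2 (Lc h 1 f) x = Lc h 1 (Lc h 2 f) x - Complex.I * h * Lc h 0 f x := by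
  have hc := LcComm hf h 2 1 hx
  simp only [Fin.sum_univ_three, eps210, eps211, eps212] at hc
  linear_combination hc

set_option maxHeartbeats 2000000 in
theorem part1 (hbar : ℝ) (ψ : WaveFn) (hS : SmW ψ) {x : V} (hx : x ≠ 0) :
    opComm KOp (YOpL hbar) ψ x = ((2 * Complex.I) • ZOpL hbar) ψ x := by
  funext cd
  have hY : SmW (YOpL hbar ψ) := SmW_Y hS hbar
  have hK : SmW (KOp ψ) := SmW_K hS
  have hLcK : ∀ (k : Fin 3) (uv : Fin 2 × Fin 2),
      Lc hbar k (cmp (KOp ψ) uv) x = ∑ w : Fin 2 × Fin 2,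
        (∑ k', pauli k' uv.1 w.1 * pauli k' uv.2 w.2) * Lc hbar k (cmp ψ w) x :=
    fun k uv => Lc_comb _ _ (fun w => hS w) hbar k hx _ (fun y _ => K_apply ψ y uv)
  show (KOp (YOpL hbar ψ) - YOpL hbar (KOp ψ)) x cd = _
  rw [Pi.sub_apply, Pi.sub_apply]
  rw [K_apply (YOpL hbar ψ) x cd]
  have hYv : ∀ uv : Fin 2 × Fin 2, YOpL hbar ψ x uv
      = ∑ k, ∑ u, pauli k uv.1 u * Lc hbar k (cmp ψ (u, uv.2)) x :=
    fun uv => Y_apply hS hbar hx uv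
  simp only [hYv]
  rw [Y_apply hK hbar hx cd]
  simp only [hLcK]
  have hrhs : ((2 * Complex.I) • ZOpL hbar) ψ x cd = 2 * Complex.I * ZOpL hbar ψ x cd := rfl
  rw [hrhs, Z_apply hS hbar hx cd]
  obtain ⟨c, d⟩ := cd
  simp only [Fintype.sum_prod_type, Fin.sum_univ_three, Fin.sum_univ_two]
  fin_cases c <;> fin_cases d <;>
    simp only [Fin.isValue, Fin.mk_zero, Fin.mk_one, pauli000, pauli001, pauli010, pauli011, pauli100, pauli101,
      pauli110, pauli111, pauli200, pauli201, pauli210, pauli211,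
      eps000, eps001, eps002, eps010, eps011, eps012, eps020, eps021,
      eps022, eps100, eps101, eps102, eps110, eps111, eps112, eps120, eps121, eps122,
      eps200, eps201, eps202, eps210, eps211, eps212, eps220, eps221, eps222] <;>
    ring_nf <;>
    simp only [Complex.I_sq, I_pow_three, Complex.I_pow_four, mul_neg, neg_mul, neg_neg,
      mul_one, one_mul] <;>
    ring

section parts
variable (hbar : ℝ) (ψ : WaveFn)

set_option maxHeartbeats 1000000 in
theorem hLcX' (hS : SmW ψ) {x : V} (hx : x ≠ 0) (k : Fin 3) (uv : Fin 2 × Fin 2) :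
    Lc hbar k (cmp (XOpL hbar ψ) uv) x = ∑ i : Fin 3 × Fin 2,
      pauli i.1 uv.2 i.2 * Lc hbar k (Lc hbar i.1 (cmp ψ (uv.1, i.2))) x := by
  refine Lc_comb (fun i : Fin 3 × Fin 2 => pauli i.1 uv.2 i.2)
    (fun i : Fin 3 × Fin 2 => Lc hbar i.1 (cmp ψ (uv.1, i.2)))
    (fun i => Sm_Lc (hS _) hbar i.1) hbar k hx _ ?_
  intro y hy
  have h1 : cmp (XOpL hbar ψ) uv y = XOpL hbar ψ y uv := rfl
  rw [h1, X_apply hS hbar hy uv, Fintype.sum_prod_type]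

set_option maxHeartbeats 1000000 in
theorem hLcY' (hS : SmW ψ) {x : V} (hx : x ≠ 0) (k : Fin 3) (uv : Fin 2 × Fin 2) :
    Lc hbar k (cmp (YOpL hbar ψ) uv) x = ∑ i : Fin 3 × Fin 2,
      pauli i.1 uv.1 i.2 * Lc hbar k (Lc hbar i.1 (cmp ψ (i.2, uv.2))) x := by
  refine Lc_comb (fun i : Fin 3 × Fin 2 => pauli i.1 uv.1 i.2)
    (fun i : Fin 3 × Fin 2 => Lc hbar i.1 (cmp ψ (i.2, uv.2)))
    (fun i => Sm_Lc (hS _) hbar i.1) hbar k hx _ ?_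
  intro y hy
  have h1 : cmp (YOpL hbar ψ) uv y = YOpL hbar ψ y uv := rfl
  rw [h1, Y_apply hS hbar hy uv, Fintype.sum_prod_type]

set_option maxHeartbeats 1000000 in
theorem hLcZ' (hS : SmW ψ) {x : V} (hx : x ≠ 0) (k : Fin 3) (uv : Fin 2 × Fin 2) :
    Lc hbar k (cmp (ZOpL hbar ψ) uv) x = ∑ i : Fin 3 × (Fin 2 × Fin 2),
      (∑ l, ∑ m, eps i.1 l m * (pauli l uv.1 i.2.1 * pauli m uv.2 i.2.2))
        * Lc hbar k (Lc hbar i.1 (cmp ψ i.2)) x := by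
  refine Lc_comb (fun i : Fin 3 × (Fin 2 × Fin 2) =>
      ∑ l, ∑ m, eps i.1 l m * (pauli l uv.1 i.2.1 * pauli m uv.2 i.2.2))
    (fun i : Fin 3 × (Fin 2 × Fin 2) => Lc hbar i.1 (cmp ψ i.2))
    (fun i => Sm_Lc (hS _) hbar i.1) hbar k hx _ ?_
  intro y hy
  have h1 : cmp (ZOpL hbar ψ) uv y = ZOpL hbar ψ y uv := rfl
  rw [h1, Z_apply hS hbar hy uv, Fintype.sum_prod_type]

set_option maxHeartbeats 1000000 in
theorem hLcK' (hS : SmW ψ) {x : V} (hx : x ≠ 0) (k : Fin 3) (uv : Fin 2 × Fin 2) :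
    Lc hbar k (cmp (KOp ψ) uv) x = ∑ w : Fin 2 × Fin 2,
      (∑ k', pauli k' uv.1 w.1 * pauli k' uv.2 w.2) * Lc hbar k (cmp ψ w) x :=
  Lc_comb _ _ (fun w => hS w) hbar k hx _ (fun y _ => K_apply ψ y uv)

end parts

set_option maxHeartbeats 4000000 in
theorem part2 (hbar : ℝ) (ψ : WaveFn) (hS : SmW ψ) {x : V} (hx : x ≠ 0) :
    opComm KOp (XOpL hbar) ψ x = ((-(2 * Complex.I)) • ZOpL hbar) ψ x := by
  funext cd
  have hK : SmW (KOp ψ) := SmW_K hS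
  show (KOp (XOpL hbar ψ) - XOpL hbar (KOp ψ)) x cd = _
  rw [Pi.sub_apply, Pi.sub_apply]
  rw [K_apply (XOpL hbar ψ) x cd]
  have hXv : ∀ uv : Fin 2 × Fin 2, XOpL hbar ψ x uv
      = ∑ k, ∑ u, pauli k uv.2 u * Lc hbar k (cmp ψ (uv.1, u)) x :=
    fun uv => X_apply hS hbar hx uv
  simp only [hXv]
  rw [X_apply hK hbar hx cd]
  simp only [hLcK' hbar ψ hS hx]
  have hrhs : ((-(2 * Complex.I)) • ZOpL hbar) ψ x cd
      = -(2 * Complex.I) * ZOpL hbar ψ x cd := rfl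
  rw [hrhs, Z_apply hS hbar hx cd]
  obtain ⟨c, d⟩ := cd
  simp only [Fintype.sum_prod_type, Fin.sum_univ_three, Fin.sum_univ_two]
  fin_cases c <;> fin_cases d <;>
    simp only [Fin.isValue, Fin.mk_zero, Fin.mk_one, pauli000, pauli001, pauli010, pauli011,
      pauli100, pauli101, pauli110, pauli111, pauli200, pauli201, pauli210, pauli211,
      eps000, eps001, eps002, eps010, eps011, eps012, eps020, eps021,
      eps022, eps100, eps101, eps102, eps110, eps111, eps112, eps120, eps121, eps122,
      eps200, eps201, eps202, eps210, eps211, eps212, eps220, eps221, eps222] <;>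
    ring_nf <;>
    simp only [Complex.I_sq, I_pow_three, Complex.I_pow_four, mul_neg, neg_mul, neg_neg,
      mul_one, one_mul] <;>
    ring

set_option maxHeartbeats 4000000 in
theorem part3 (hbar : ℝ) (ψ : WaveFn) (hS : SmW ψ) {x : V} (hx : x ≠ 0) :
    opComm KOp (ZOpL hbar) ψ x = ((4 * Complex.I) • (XOpL hbar - YOpL hbar)) ψ x := by
  funext cd
  have hK : SmW (KOp ψ) := SmW_K hS
  show (KOp (ZOpL hbar ψ) - ZOpL hbar (KOp ψ)) x cd = _
  rw [Pi.sub_apply, Pi.sub_apply]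
  rw [K_apply (ZOpL hbar ψ) x cd]
  have hZv : ∀ uv : Fin 2 × Fin 2, ZOpL hbar ψ x uv = ∑ k, ∑ w : Fin 2 × Fin 2,
      (∑ l, ∑ m, eps k l m * (pauli l uv.1 w.1 * pauli m uv.2 w.2)) * Lc hbar k (cmp ψ w) x :=
    fun uv => Z_apply hS hbar hx uv
  simp only [hZv]
  rw [Z_apply hK hbar hx cd]
  simp only [hLcK' hbar ψ hS hx]
  have hrhs : ((4 * Complex.I) • (XOpL hbar - YOpL hbar)) ψ x cd
      = 4 * Complex.I * (XOpL hbar ψ x cd - YOpL hbar ψ x cd) := rfl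
  rw [hrhs, X_apply hS hbar hx cd, Y_apply hS hbar hx cd]
  obtain ⟨c, d⟩ := cd
  simp only [Fintype.sum_prod_type, Fin.sum_univ_three, Fin.sum_univ_two]
  fin_cases c <;> fin_cases d <;>
    simp only [Fin.isValue, Fin.mk_zero, Fin.mk_one, pauli000, pauli001, pauli010, pauli011,
      pauli100, pauli101, pauli110, pauli111, pauli200, pauli201, pauli210, pauli211,
      eps000, eps001, eps002, eps010, eps011, eps012, eps020, eps021,
      eps022, eps100, eps101, eps102, eps110, eps111, eps112, eps120, eps121, eps122,
      eps200, eps201, eps202, eps210, eps211, eps212, eps220, eps221, eps222] <;>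
    ring_nf <;>
    simp only [Complex.I_sq, I_pow_three, Complex.I_pow_four, mul_neg, neg_mul, neg_neg,
      mul_one, one_mul] <;>
    ring

set_option maxHeartbeats 4000000 in
theorem part4 (hbar : ℝ) (ψ : WaveFn) (hS : SmW ψ) {x : V} (hx : x ≠ 0) :
    opComm (YOpL hbar) (XOpL hbar) ψ x = ((Complex.I * (hbar : ℂ)) • ZOpL hbar) ψ x := by
  funext cd
  have hXw : SmW (XOpL hbar ψ) := SmW_X hS hbar
  have hYw : SmW (YOpL hbar ψ) := SmW_Y hS hbar
  show (YOpL hbar (XOpL hbar ψ) - XOpL hbar (YOpL hbar ψ)) x cd = _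
  rw [Pi.sub_apply, Pi.sub_apply]
  rw [Y_apply hXw hbar hx cd, X_apply hYw hbar hx cd]
  simp only [hLcX' hbar ψ hS hx, hLcY' hbar ψ hS hx]
  have hrhs : ((Complex.I * (hbar : ℂ)) • ZOpL hbar) ψ x cd
      = Complex.I * (hbar : ℂ) * ZOpL hbar ψ x cd := rfl
  rw [hrhs, Z_apply hS hbar hx cd]
  have s10 : ∀ w : Fin 2 × Fin 2, Lc hbar 1 (Lc hbar 0 (cmp ψ w)) x
      = Lc hbar 0 (Lc hbar 1 (cmp ψ w)) x - Complex.I * hbar * Lc hbar 2 (cmp ψ w) x :=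
    fun w => Lc_swap10 (hS w) hbar hx
  have s20 : ∀ w : Fin 2 × Fin 2, Lc hbar 2 (Lc hbar 0 (cmp ψ w)) x
      = Lc hbar 0 (Lc hbar 2 (cmp ψ w)) x + Complex.I * hbar * Lc hbar 1 (cmp ψ w) x :=
    fun w => Lc_swap20 (hS w) hbar hx
  have s21 : ∀ w : Fin 2 × Fin 2, Lc hbar 2 (Lc hbar 1 (cmp ψ w)) x
      = Lc hbar 1 (Lc hbar 2 (cmp ψ w)) x - Complex.I * hbar * Lc hbar 0 (cmp ψ w) x :=
    fun w => Lc_swap21 (hS w) hbar hx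
  obtain ⟨c, d⟩ := cd
  simp only [Fintype.sum_prod_type, Fin.sum_univ_three, Fin.sum_univ_two]
  simp only [s10, s20, s21]
  fin_cases c <;> fin_cases d <;>
    simp only [Fin.isValue, Fin.mk_zero, Fin.mk_one, pauli000, pauli001, pauli010, pauli011,
      pauli100, pauli101, pauli110, pauli111, pauli200, pauli201, pauli210, pauli211,
      eps000, eps001, eps002, eps010, eps011, eps012, eps020, eps021,
      eps022, eps100, eps101, eps102, eps110, eps111, eps112, eps120, eps121, eps122,
      eps200, eps201, eps202, eps210, eps211, eps212, eps220, eps221, eps222] <;>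
    ring_nf <;>
    simp only [Complex.I_sq, I_pow_three, Complex.I_pow_four, mul_neg, neg_mul, neg_neg,
      mul_one, one_mul] <;>
    ring

set_option maxHeartbeats 4000000 in
theorem part5 (hbar : ℝ) (ψ : WaveFn) (hS : SmW ψ) {x : V} (hx : x ≠ 0) :
    opComm (YOpL hbar) (ZOpL hbar) ψ x
        = ((2 * Complex.I) • (KOp ∘ L2Op hbar)
            - Complex.I • (YOpL hbar ∘ XOpL hbar + XOpL hbar ∘ YOpL hbar)
            - (2 * Complex.I * (hbar : ℂ)) • XOpL hbar) ψ x := by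
  funext cd
  have hXw : SmW (XOpL hbar ψ) := SmW_X hS hbar
  have hYw : SmW (YOpL hbar ψ) := SmW_Y hS hbar
  have hZw : SmW (ZOpL hbar ψ) := SmW_Z hS hbar
  show (YOpL hbar (ZOpL hbar ψ) - ZOpL hbar (YOpL hbar ψ)) x cd = _
  rw [Pi.sub_apply, Pi.sub_apply]
  rw [Y_apply hZw hbar hx cd, Z_apply hYw hbar hx cd]
  simp only [hLcZ' hbar ψ hS hx, hLcY' hbar ψ hS hx]
  have hrhs : ((2 * Complex.I) • (KOp ∘ L2Op hbar)
            - Complex.I • (YOpL hbar ∘ XOpL hbar + XOpL hbar ∘ YOpL hbar)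
            - (2 * Complex.I * (hbar : ℂ)) • XOpL hbar) ψ x cd
      = 2 * Complex.I * KOp (L2Op hbar ψ) x cd
        - Complex.I * (YOpL hbar (XOpL hbar ψ) x cd + XOpL hbar (YOpL hbar ψ) x cd)
        - 2 * Complex.I * (hbar : ℂ) * XOpL hbar ψ x cd := rfl
  rw [hrhs, K_apply (L2Op hbar ψ) x cd]
  have hL2v : ∀ uv : Fin 2 × Fin 2, L2Op hbar ψ x uv
      = ∑ k, Lc hbar k (Lc hbar k (cmp ψ uv)) x := fun uv => L2_apply hS hbar hx uv
  simp only [hL2v]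
  rw [Y_apply hXw hbar hx cd, X_apply hYw hbar hx cd, X_apply hS hbar hx cd]
  simp only [hLcX' hbar ψ hS hx, hLcY' hbar ψ hS hx]
  have s10 : ∀ w : Fin 2 × Fin 2, Lc hbar 1 (Lc hbar 0 (cmp ψ w)) x
      = Lc hbar 0 (Lc hbar 1 (cmp ψ w)) x - Complex.I * hbar * Lc hbar 2 (cmp ψ w) x :=
    fun w => Lc_swap10 (hS w) hbar hx
  have s20 : ∀ w : Fin 2 × Fin 2, Lc hbar 2 (Lc hbar 0 (cmp ψ w)) x
      = Lc hbar 0 (Lc hbar 2 (cmp ψ w)) x + Complex.I * hbar * Lc hbar 1 (cmp ψ w) x :=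
    fun w => Lc_swap20 (hS w) hbar hx
  have s21 : ∀ w : Fin 2 × Fin 2, Lc hbar 2 (Lc hbar 1 (cmp ψ w)) x
      = Lc hbar 1 (Lc hbar 2 (cmp ψ w)) x - Complex.I * hbar * Lc hbar 0 (cmp ψ w) x :=
    fun w => Lc_swap21 (hS w) hbar hx
  obtain ⟨c, d⟩ := cd
  simp only [Fintype.sum_prod_type, Fin.sum_univ_three, Fin.sum_univ_two]
  simp only [s10, s20, s21]
  fin_cases c <;> fin_cases d <;>
    simp only [Fin.isValue, Fin.mk_zero, Fin.mk_one, pauli000, pauli001, pauli010, pauli011,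
      pauli100, pauli101, pauli110, pauli111, pauli200, pauli201, pauli210, pauli211,
      eps000, eps001, eps002, eps010, eps011, eps012, eps020, eps021,
      eps022, eps100, eps101, eps102, eps110, eps111, eps112, eps120, eps121, eps122,
      eps200, eps201, eps202, eps210, eps211, eps212, eps220, eps221, eps222] <;>
    ring_nf <;>
    simp only [Complex.I_sq, I_pow_three, Complex.I_pow_four, mul_neg, neg_mul, neg_neg,
      mul_one, one_mul] <;>
    ring

set_option maxHeartbeats 4000000 in
theorem part6 (hbar : ℝ) (ψ : WaveFn) (hS : SmW ψ) {x : V} (hx : x ≠ 0) :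
    opComm (XOpL hbar) (ZOpL hbar) ψ x
        = ((-(2 * Complex.I)) • (KOp ∘ L2Op hbar)
            + Complex.I • (YOpL hbar ∘ XOpL hbar + XOpL hbar ∘ YOpL hbar)
            + (2 * Complex.I * (hbar : ℂ)) • YOpL hbar) ψ x := by
  funext cd
  have hXw : SmW (XOpL hbar ψ) := SmW_X hS hbar
  have hYw : SmW (YOpL hbar ψ) := SmW_Y hS hbar
  have hZw : SmW (ZOpL hbar ψ) := SmW_Z hS hbar
  show (XOpL hbar (ZOpL hbar ψ) - ZOpL hbar (XOpL hbar ψ)) x cd = _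
  rw [Pi.sub_apply, Pi.sub_apply]
  rw [X_apply hZw hbar hx cd, Z_apply hXw hbar hx cd]
  simp only [hLcZ' hbar ψ hS hx, hLcX' hbar ψ hS hx]
  have hrhs : ((-(2 * Complex.I)) • (KOp ∘ L2Op hbar)
            + Complex.I • (YOpL hbar ∘ XOpL hbar + XOpL hbar ∘ YOpL hbar)
            + (2 * Complex.I * (hbar : ℂ)) • YOpL hbar) ψ x cd
      = -(2 * Complex.I) * KOp (L2Op hbar ψ) x cd
        + Complex.I * (YOpL hbar (XOpL hbar ψ) x cd + XOpL hbar (YOpL hbar ψ) x cd)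
        + 2 * Complex.I * (hbar : ℂ) * YOpL hbar ψ x cd := rfl
  rw [hrhs, K_apply (L2Op hbar ψ) x cd]
  have hL2v : ∀ uv : Fin 2 × Fin 2, L2Op hbar ψ x uv
      = ∑ k, Lc hbar k (Lc hbar k (cmp ψ uv)) x := fun uv => L2_apply hS hbar hx uv
  simp only [hL2v]
  rw [Y_apply hXw hbar hx cd, X_apply hYw hbar hx cd, Y_apply hS hbar hx cd]
  simp only [hLcX' hbar ψ hS hx, hLcY' hbar ψ hS hx]
  have s10 : ∀ w : Fin 2 × Fin 2, Lc hbar 1 (Lc hbar 0 (cmp ψ w)) x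
      = Lc hbar 0 (Lc hbar 1 (cmp ψ w)) x - Complex.I * hbar * Lc hbar 2 (cmp ψ w) x :=
    fun w => Lc_swap10 (hS w) hbar hx
  have s20 : ∀ w : Fin 2 × Fin 2, Lc hbar 2 (Lc hbar 0 (cmp ψ w)) x
      = Lc hbar 0 (Lc hbar 2 (cmp ψ w)) x + Complex.I * hbar * Lc hbar 1 (cmp ψ w) x :=
    fun w => Lc_swap20 (hS w) hbar hx
  have s21 : ∀ w : Fin 2 × Fin 2, Lc hbar 2 (Lc hbar 1 (cmp ψ w)) x
      = Lc hbar 1 (Lc hbar 2 (cmp ψ w)) x - Complex.I * hbar * Lc hbar 0 (cmp ψ w) x :=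
    fun w => Lc_swap21 (hS w) hbar hx
  obtain ⟨c, d⟩ := cd
  simp only [Fintype.sum_prod_type, Fin.sum_univ_three, Fin.sum_univ_two]
  simp only [s10, s20, s21]
  fin_cases c <;> fin_cases d <;>
    simp only [Fin.isValue, Fin.mk_zero, Fin.mk_one, pauli000, pauli001, pauli010, pauli011,
      pauli100, pauli101, pauli110, pauli111, pauli200, pauli201, pauli210, pauli211,
      eps000, eps001, eps002, eps010, eps011, eps012, eps020, eps021,
      eps022, eps100, eps101, eps102, eps110, eps111, eps112, eps120, eps121, eps122,
      eps200, eps201, eps202, eps210, eps211, eps212, eps220, eps221, eps222] <;>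
    ring_nf <;>
    simp only [Complex.I_sq, I_pow_three, Complex.I_pow_four, mul_neg, neg_mul, neg_neg,
      mul_one, one_mul] <;>
    ring

end S17

/-- `[K,Y] = 2iZ`, `[K,X] = −2iZ`, `[K,Z] = 4i(X−Y)`, `[Y,X] = iħZ`,
`[Y,Z] = 2iKL² − i(YX+XY) − 2iħX` and `[X,Z] = −2iKL² + i(YX+XY) + 2iħY`. -/
theorem statement17 (hbar : ℝ) (hhbar : hbar ≠ 0)
    (ψ : WaveFn) (hψ : ContDiffOn ℝ (⊤ : ℕ∞) ψ {x : Fin 3 → ℝ | x ≠ 0})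
    (x : Fin 3 → ℝ) (hx : x ≠ 0) :
    opComm KOp (YOpL hbar) ψ x = ((2 * Complex.I) • ZOpL hbar) ψ x
    ∧ opComm KOp (XOpL hbar) ψ x = ((-(2 * Complex.I)) • ZOpL hbar) ψ x
    ∧ opComm KOp (ZOpL hbar) ψ x = ((4 * Complex.I) • (XOpL hbar - YOpL hbar)) ψ x
    ∧ opComm (YOpL hbar) (XOpL hbar) ψ x = ((Complex.I * (hbar : ℂ)) • ZOpL hbar) ψ x
    ∧ opComm (YOpL hbar) (ZOpL hbar) ψ x
        = ((2 * Complex.I) • (KOp ∘ L2Op hbar)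
            - Complex.I • (YOpL hbar ∘ XOpL hbar + XOpL hbar ∘ YOpL hbar)
            - (2 * Complex.I * (hbar : ℂ)) • XOpL hbar) ψ x
    ∧ opComm (XOpL hbar) (ZOpL hbar) ψ x
        = ((-(2 * Complex.I)) • (KOp ∘ L2Op hbar)
            + Complex.I • (YOpL hbar ∘ XOpL hbar + XOpL hbar ∘ YOpL hbar)
            + (2 * Complex.I * (hbar : ℂ)) • YOpL hbar) ψ x := by
  have hS : S17.SmW ψ := S17.smW_of_hyp hψ
  exact ⟨S17.part1 hbar ψ hS hx, S17.part2 hbar ψ hS hx, S17.part3 hbar ψ hS hx,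
    S17.part4 hbar ψ hS hx, S17.part5 hbar ψ hS hx, S17.part6 hbar ψ hS hx⟩
end
end
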